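/- Let M be an odd natural number, set M_e = (M+1)/2, let p_m be a real number with 0 ≤ p_m ≤ 1 and let N_a be a natural number. Define p_M = Σ_{k=M_e}^{M} C(M, k) · p_m^k · (1 − p_m)^{M − k} and L_M = 1 − (1 − p_M)^{N_a}. Then L_M ≤ N_a · C(M, M_e) · p_m^{M_e}. -/

import Mathlib

open Finset

/-!
Counting pairs of a `j`-subset inside a `(j + i)`-subset of a `(j + m)`-set gives
`C(j + m, j + i) ≤ C(j + m, j) * C(m, i)`, so the binomial tail `∑_{k ≥ j} C(n, k) p^k (1-p)^(n-k)`
is at most `C(n, j) p^j` times a full binomial expansion of `(p + (1 - p))^(n - j) = 1`.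
Bernoulli's inequality `(1 - p)^N ≥ 1 - N p` then finishes the union bound over the ancillas.
-/

theorem Nat.choose_add_add_le_choose_mul_choose (j m i : ℕ) :
    (j + m).choose (j + i) ≤ (j + m).choose j * m.choose i := by
  have h := Nat.choose_mul (n := j + m) (Nat.le_add_right j i)
  simp only [Nat.add_sub_cancel_left] at h
  exact h ▸ Nat.le_mul_of_pos_right _ (Nat.choose_pos (Nat.le_add_right j i))

theorem sum_range_choose_mul_pow_mul_one_sub_pow {R : Type*} [CommRing R] (p : R) (n : ℕ) :
    ∑ k ∈ range (n + 1), (n.choose k : R) * p ^ k * (1 - p) ^ (n - k) = 1 := by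
  have h := (add_pow p (1 - p) n).symm
  rw [add_sub_cancel, one_pow] at h
  exact (sum_congr rfl fun k _ => by ring).trans h

theorem sum_Icc_choose_mul_pow_mul_one_sub_pow_le_one {p : ℝ} (hp0 : 0 ≤ p) (hp1 : p ≤ 1)
    (n j : ℕ) : ∑ k ∈ Icc j n, (n.choose k : ℝ) * p ^ k * (1 - p) ^ (n - k) ≤ 1 := by
  have hp1' : 0 ≤ 1 - p := sub_nonneg.mpr hp1
  calc ∑ k ∈ Icc j n, (n.choose k : ℝ) * p ^ k * (1 - p) ^ (n - k)
      ≤ ∑ k ∈ range (n + 1), (n.choose k : ℝ) * p ^ k * (1 - p) ^ (n - k) :=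
        sum_le_sum_of_subset_of_nonneg (fun k hk => by grind)
          fun k _ _ => by positivity
    _ = 1 := sum_range_choose_mul_pow_mul_one_sub_pow p n

theorem sum_Icc_choose_mul_pow_mul_one_sub_pow_le {p : ℝ} (hp0 : 0 ≤ p) (hp1 : p ≤ 1)
    (n j : ℕ) :
    ∑ k ∈ Icc j n, (n.choose k : ℝ) * p ^ k * (1 - p) ^ (n - k) ≤ n.choose j * p ^ j := by
  rcases lt_or_ge n j with hnj | hjn
  · simp [Icc_eq_empty_of_lt hnj, Nat.choose_eq_zero_of_lt hnj]
  obtain ⟨m, rfl⟩ := Nat.exists_eq_add_of_le hjn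
  have hp1' : 0 ≤ 1 - p := sub_nonneg.mpr hp1
  calc ∑ k ∈ Icc j (j + m), ((j + m).choose k : ℝ) * p ^ k * (1 - p) ^ (j + m - k)
      = ∑ i ∈ range (m + 1), ((j + m).choose (j + i) : ℝ) * p ^ (j + i) * (1 - p) ^ (m - i) := by
        rw [← Ico_add_one_right_eq_Icc, sum_Ico_eq_sum_range, Nat.add_assoc, Nat.add_sub_cancel_left]
        simp only [Nat.add_sub_add_left]
    _ ≤ ∑ i ∈ range (m + 1),
          ((j + m).choose j * p ^ j) * ((m.choose i : ℝ) * p ^ i * (1 - p) ^ (m - i)) := by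
        refine sum_le_sum fun i _ => ?_
        have hchoose : ((j + m).choose (j + i) : ℝ) ≤ (j + m).choose j * m.choose i := by
          exact_mod_cast Nat.choose_add_add_le_choose_mul_choose j m i
        calc ((j + m).choose (j + i) : ℝ) * p ^ (j + i) * (1 - p) ^ (m - i)
            = ((j + m).choose (j + i) : ℝ) * (p ^ j * p ^ i * (1 - p) ^ (m - i)) := by ring
          _ ≤ ((j + m).choose j * m.choose i) * (p ^ j * p ^ i * (1 - p) ^ (m - i)) := by
            gcongr
          _ = _ := by ring
    _ = (j + m).choose j * p ^ j := by
        rw [← mul_sum, sum_range_choose_mul_pow_mul_one_sub_pow, mul_one]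

theorem one_sub_one_sub_pow_le_mul {p : ℝ} (hp : p ≤ 2) (n : ℕ) : 1 - (1 - p) ^ n ≤ n * p := by
  have h := one_add_mul_sub_le_pow (a := 1 - p) (by linarith) n
  linarith

theorem measurement_error_bound_general (M Me Na : ℕ)
    (pm : ℝ) (hpm0 : 0 ≤ pm) (hpm1 : pm ≤ 1) :
    1 - (1 - ∑ k ∈ Finset.Icc Me M,
          (Nat.choose M k : ℝ) * pm ^ k * (1 - pm) ^ (M - k)) ^ Na ≤
      (Na : ℝ) * (Nat.choose M Me : ℝ) * pm ^ Me := by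
  have htail_le_one := sum_Icc_choose_mul_pow_mul_one_sub_pow_le_one hpm0 hpm1 M Me
  calc _ ≤ (Na : ℝ) * ∑ k ∈ Finset.Icc Me M, (Nat.choose M k : ℝ) * pm ^ k * (1 - pm) ^ (M - k) :=
        one_sub_one_sub_pow_le_mul (by linarith) Na
    _ ≤ (Na : ℝ) * ((Nat.choose M Me : ℝ) * pm ^ Me) := by
        gcongr
        exact sum_Icc_choose_mul_pow_mul_one_sub_pow_le hpm0 hpm1 M Me
    _ = (Na : ℝ) * (Nat.choose M Me : ℝ) * pm ^ Me := (mul_assoc _ _ _).symm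

/-- For odd `M`, `M_e = (M+1)/2`, per-measurement error probability `p_m` and `N_a`
    ancilla qubits, the probability `L_M = 1 - (1 - p_M)^{N_a}` that some ancilla's
    majority vote fails satisfies `L_M ≤ N_a · C(M, M_e) · p_m^{M_e}`. -/
theorem measurement_error_bound (M Me Na : ℕ) (hM : Odd M) (hMe : Me = (M + 1) / 2)
    (pm : ℝ) (hpm0 : 0 ≤ pm) (hpm1 : pm ≤ 1) :
    1 - (1 - ∑ k ∈ Finset.Icc Me M,
          (Nat.choose M k : ℝ) * pm ^ k * (1 - pm) ^ (M - k)) ^ Na ≤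
      (Na : ℝ) * (Nat.choose M Me : ℝ) * pm ^ Me :=
  measurement_error_bound_general M Me Na pm hpm0 hpm1
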